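/- The set of upper-triangular matrices commuting with N_γ = E_{l,1} − E_{2l,(l+1)} in gl_{2l} is a linear subspace of dimension (2l−1)(l−2) + 4. -/

import Mathlib

open Matrix Finset

/-- The subspace of upper-triangular matrices commuting with a given matrix `M`. -/
noncomputable def commTriang (n : ℕ) (M : Matrix (Fin n) (Fin n) ℂ) :
    Submodule ℂ (Matrix (Fin n) (Fin n) ℂ) where
  carrier := {x | x.BlockTriangular id ∧ x * M = M * x}
  add_mem' := by
    rintro x y ⟨hx1, hx2⟩ ⟨hy1, hy2⟩
    refine ⟨fun i j h => ?_, by rw [add_mul, mul_add, hx2, hy2]⟩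
    simp [Matrix.add_apply, hx1 h, hy1 h]
  zero_mem' := ⟨fun i j h => rfl, by simp⟩
  smul_mem' := by
    rintro c x ⟨hx1, hx2⟩
    refine ⟨fun i j h => ?_, ?_⟩
    · simp [Matrix.smul_apply, hx1 h]
    · rw [smul_mul_assoc, hx2, mul_smul_comm]

namespace DimComm
variable {m : ℕ}
def ia (m : ℕ) : Fin (2*(m+2)) := ⟨0, by omega⟩
def ib (m : ℕ) : Fin (2*(m+2)) := ⟨m+1, by omega⟩
def ic (m : ℕ) : Fin (2*(m+2)) := ⟨m+2, by omega⟩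
def idd (m : ℕ) : Fin (2*(m+2)) := ⟨2*m+3, by omega⟩
@[simp] lemma ia_val : (ia m).1 = 0 := rfl
@[simp] lemma ib_val : (ib m).1 = m+1 := rfl
@[simp] lemma ic_val : (ic m).1 = m+2 := rfl
@[simp] lemma idd_val : (idd m).1 = 2*m+3 := rfl
@[simp] lemma ib_ne_idd : ib m ≠ idd m := by simp [Fin.ext_iff]; omega
@[simp] lemma idd_ne_ib : idd m ≠ ib m := by simp [Fin.ext_iff]; omega
@[simp] lemma ia_ne_ic : ia m ≠ ic m := by simp [Fin.ext_iff]
@[simp] lemma ic_ne_ia : ic m ≠ ia m := by simp [Fin.ext_iff]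
@[simp] lemma ia_ne_ib : ia m ≠ ib m := by simp [Fin.ext_iff]
@[simp] lemma ib_ne_ia : ib m ≠ ia m := by simp [Fin.ext_iff]
@[simp] lemma ic_ne_ib : ic m ≠ ib m := by simp [Fin.ext_iff]
@[simp] lemma ib_ne_ic : ib m ≠ ic m := by simp [Fin.ext_iff]
@[simp] lemma ic_ne_idd : ic m ≠ idd m := by simp [Fin.ext_iff]; omega
@[simp] lemma idd_ne_ic : idd m ≠ ic m := by simp [Fin.ext_iff]; omega
@[simp] lemma ia_ne_idd : ia m ≠ idd m := by simp [Fin.ext_iff]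
@[simp] lemma idd_ne_ia : idd m ≠ ia m := by simp [Fin.ext_iff]

def Nmat (m : ℕ) : Matrix (Fin (2*(m+2))) (Fin (2*(m+2))) ℂ :=
  single (ib m) (ia m) 1 - single (idd m) (ic m) 1

lemma mul_N_apply (x : Matrix (Fin (2*(m+2))) (Fin (2*(m+2))) ℂ) (i j : Fin (2*(m+2))) :
    (x * Nmat m) i j =
      (if j = ia m then x i (ib m) else 0) - (if j = ic m then x i (idd m) else 0) := by
  rw [Nmat, mul_sub, Matrix.sub_apply]
  congr 1
  · by_cases h : j = ia m
    · subst h; simp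
    · rw [if_neg h]; exact mul_single_apply_of_ne _ _ _ _ _ h _
  · by_cases h : j = ic m
    · subst h; simp
    · rw [if_neg h]; exact mul_single_apply_of_ne _ _ _ _ _ h _

lemma N_mul_apply (x : Matrix (Fin (2*(m+2))) (Fin (2*(m+2))) ℂ) (i j : Fin (2*(m+2))) :
    (Nmat m * x) i j =
      (if i = ib m then x (ia m) j else 0) - (if i = idd m then x (ic m) j else 0) := by
  rw [Nmat, sub_mul, Matrix.sub_apply]
  congr 1
  · by_cases h : i = ib m
    · subst h; simp
    · rw [if_neg h]; exact single_mul_apply_of_ne _ _ _ _ _ h _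
  · by_cases h : i = idd m
    · subst h; simp
    · rw [if_neg h]; exact single_mul_apply_of_ne _ _ _ _ _ h _

lemma comm_iff (x : Matrix (Fin (2*(m+2))) (Fin (2*(m+2))) ℂ) :
    x * Nmat m = Nmat m * x ↔ ∀ i j,
      (if j = ia m then x i (ib m) else 0) - (if j = ic m then x i (idd m) else 0) =
      (if i = ib m then x (ia m) j else 0) - (if i = idd m then x (ic m) j else 0) := by
  rw [← Matrix.ext_iff]
  constructor
  · intro h i j; rw [← mul_N_apply, ← N_mul_apply]; exact h i j
  · intro h i j; rw [mul_N_apply, N_mul_apply]; exact h i j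

def Sf (m : ℕ) : Finset (Fin (2*(m+2)) × Fin (2*(m+2))) :=
  univ.filter fun p => p.1.1 ≤ p.2.1 ∧ p.2.1 ≠ m+1 ∧ p.2.1 ≠ 2*m+3 ∧
    (p.1.1 = 0 → p.2.1 = 0 ∨ p.2.1 = m+2) ∧ (p.1.1 = m+2 → p.2.1 = m+2)

lemma mem_Sf {p : Fin (2*(m+2)) × Fin (2*(m+2))} :
    p ∈ Sf m ↔ p.1.1 ≤ p.2.1 ∧ p.2.1 ≠ m+1 ∧ p.2.1 ≠ 2*m+3 ∧
    (p.1.1 = 0 → p.2.1 = 0 ∨ p.2.1 = m+2) ∧ (p.1.1 = m+2 → p.2.1 = m+2) := by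
  simp [Sf]

lemma mem_Sf' {i j : Fin (2*(m+2))} :
    (i, j) ∈ Sf m ↔ i.1 ≤ j.1 ∧ j.1 ≠ m+1 ∧ j.1 ≠ 2*m+3 ∧
    (i.1 = 0 → j.1 = 0 ∨ j.1 = m+2) ∧ (i.1 = m+2 → j.1 = m+2) := mem_Sf

lemma mem_aa : ((ia m, ia m)) ∈ Sf m := by rw [mem_Sf]; simp
lemma mem_ac : ((ia m, ic m)) ∈ Sf m := by rw [mem_Sf]; simp; omega
lemma mem_cc : ((ic m, ic m)) ∈ Sf m := by rw [mem_Sf]; simp; omega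

def phi (m : ℕ) (f : Sf m → ℂ) : Matrix (Fin (2*(m+2))) (Fin (2*(m+2))) ℂ :=
  fun i j =>
    if h : (i, j) ∈ Sf m then f ⟨(i, j), h⟩
    else if i = ib m ∧ j = ib m then f ⟨(ia m, ia m), mem_aa⟩
    else if i = ib m ∧ j = idd m then - f ⟨(ia m, ic m), mem_ac⟩
    else if i = idd m ∧ j = idd m then f ⟨(ic m, ic m), mem_cc⟩
    else 0

lemma phi_col_b (f : Sf m → ℂ) (i : Fin (2*(m+2))) :
    phi m f i (ib m) = if i = ib m then f ⟨(ia m, ia m), mem_aa⟩ else 0 := by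
  have hS : ((i, ib m)) ∉ Sf m := by rw [mem_Sf]; simp
  by_cases h : i = ib m
  · subst h; simp [phi, hS]
  · simp [phi, hS, h]

lemma phi_col_d (f : Sf m → ℂ) (i : Fin (2*(m+2))) :
    phi m f i (idd m) = if i = ib m then - f ⟨(ia m, ic m), mem_ac⟩
      else if i = idd m then f ⟨(ic m, ic m), mem_cc⟩ else 0 := by
  have hS : ((i, idd m)) ∉ Sf m := by rw [mem_Sf]; simp
  by_cases h : i = ib m
  · subst h; simp [phi, hS]
  · by_cases h2 : i = idd m
    · subst h2; simp [phi, hS, h]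
    · simp [phi, hS, h, h2]

lemma phi_row_a (f : Sf m → ℂ) (j : Fin (2*(m+2))) :
    phi m f (ia m) j = if j = ia m then f ⟨(ia m, ia m), mem_aa⟩
      else if j = ic m then f ⟨(ia m, ic m), mem_ac⟩ else 0 := by
  by_cases h : j = ia m
  · subst h; simp [phi, mem_aa]
  · by_cases h2 : j = ic m
    · subst h2; simp [phi, mem_ac, h]
    · have hS : ((ia m, j)) ∉ Sf m := by
        rw [mem_Sf]; simp [Fin.ext_iff, -Fin.val_eq_zero_iff] at h h2 ⊢; omega
      simp [phi, hS, h, h2]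

lemma phi_row_c (f : Sf m → ℂ) (j : Fin (2*(m+2))) :
    phi m f (ic m) j = if j = ic m then f ⟨(ic m, ic m), mem_cc⟩ else 0 := by
  by_cases h : j = ic m
  · subst h; simp [phi, mem_cc]
  · have hS : ((ic m, j)) ∉ Sf m := by
      rw [mem_Sf]; simp [Fin.ext_iff, -Fin.val_eq_zero_iff] at h ⊢; omega
    simp [phi, hS, h]

lemma phi_tri (f : Sf m → ℂ) : (phi m f).BlockTriangular id := by
  intro i j hij
  have hj : (j : ℕ) < (i : ℕ) := hij
  have h1 : ((i, j)) ∉ Sf m := by rw [mem_Sf']; push_neg; intro h; omega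
  simp only [phi, dif_neg h1]
  split_ifs with h2 h3 h4
  · exfalso; obtain ⟨rfl, rfl⟩ := h2; omega
  · exfalso; obtain ⟨rfl, rfl⟩ := h3; simp at hj; omega
  · exfalso; obtain ⟨rfl, rfl⟩ := h4; omega
  · rfl

lemma phi_comm (f : Sf m → ℂ) : phi m f * Nmat m = Nmat m * phi m f := by
  rw [comm_iff]
  intro i j
  rw [phi_col_b, phi_col_d, phi_row_a, phi_row_c]
  by_cases hja : j = ia m <;> by_cases hjc : j = ic m <;>
    by_cases hib : i = ib m <;> by_cases hid : i = idd m <;>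
    simp_all

lemma phi_mem (f : Sf m → ℂ) : phi m f ∈ commTriang (2*(m+2)) (Nmat m) :=
  ⟨phi_tri f, phi_comm f⟩

lemma eq_phi {x : Matrix (Fin (2*(m+2))) (Fin (2*(m+2))) ℂ}
    (ht : x.BlockTriangular id) (hcomm : x * Nmat m = Nmat m * x) :
    x = phi m (fun p => x p.1.1 p.1.2) := by
  rw [comm_iff] at hcomm
  have tri : ∀ p q : Fin (2*(m+2)), (q : ℕ) < (p : ℕ) → x p q = 0 := fun p q h => ht h
  funext i j
  by_cases hS : ((i, j)) ∈ Sf m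
  · rw [phi, dif_pos hS]
  · rw [phi, dif_neg hS]
    by_cases hbb : i = ib m ∧ j = ib m
    · rw [if_pos hbb, hbb.1, hbb.2]
      have h := hcomm (ib m) (ia m)
      simpa using h
    · rw [if_neg hbb]
      by_cases hbd : i = ib m ∧ j = idd m
      · rw [if_pos hbd, hbd.1, hbd.2]
        have h := hcomm (ib m) (ic m)
        simp at h
        linear_combination -h
      · rw [if_neg hbd]
        by_cases hdd : i = idd m ∧ j = idd m
        · rw [if_pos hdd, hdd.1, hdd.2]
          have h := hcomm (idd m) (ic m)
          simpa using h
        · rw [if_neg hdd]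
          by_cases hle : (i : ℕ) ≤ (j : ℕ)
          · by_cases hjb : j = ib m
            · subst hjb
              have hnib : i ≠ ib m := fun h' => hbb ⟨h', rfl⟩
              have h0 : x (ic m) (ia m) = 0 := tri _ _ (by simp)
              have h := hcomm i (ia m)
              simpa [hnib, h0] using h
            · by_cases hjd : j = idd m
              · subst hjd
                have hnib : i ≠ ib m := fun h' => hbd ⟨h', rfl⟩
                have hnid : i ≠ idd m := fun h' => hdd ⟨h', rfl⟩
                have h := hcomm i (ic m)
                simp [hnib, hnid] at h
                simpa using h
              · by_cases hia' : i = ia m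
                · subst hia'
                  have hja : j ≠ ia m := fun h' => hS (by rw [h']; exact mem_aa)
                  have hjc : j ≠ ic m := fun h' => hS (by rw [h']; exact mem_ac)
                  have h := hcomm (ib m) j
                  simp [hja, hjc] at h
                  exact h.symm
                · by_cases hic' : i = ic m
                  · subst hic'
                    have hjc : j ≠ ic m := fun h' => hS (by rw [h']; exact mem_cc)
                    have hja : j ≠ ia m := by
                      simp [Fin.ext_iff, -Fin.val_eq_zero_iff]; omega
                    have h := hcomm (idd m) j
                    simp [hja, hjc] at h
                    simpa using h
                  · exfalso
                    apply hS
                    rw [mem_Sf']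
                    simp [Fin.ext_iff, -Fin.val_eq_zero_iff] at hjb hjd hia' hic'
                    refine ⟨hle, hjb, hjd, fun h0 => absurd h0 hia', fun h2 => absurd h2 hic'⟩
          · exact tri _ _ (by omega)

def Phi (m : ℕ) : (Sf m → ℂ) →ₗ[ℂ] Matrix (Fin (2*(m+2))) (Fin (2*(m+2))) ℂ where
  toFun := phi m
  map_add' f g := by
    funext i j
    simp only [phi, Pi.add_apply, Matrix.add_apply]
    split_ifs <;> simp <;> ring
  map_smul' c f := by
    funext i j
    simp only [phi, Pi.smul_apply, Matrix.smul_apply, RingHom.id_apply, smul_eq_mul]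
    split_ifs <;> simp

lemma Phi_inj : Function.Injective (Phi m) := by
  rw [injective_iff_map_eq_zero]
  intro f hf
  funext p
  obtain ⟨⟨i, j⟩, hp⟩ := p
  have := congrFun (congrFun hf i) j
  change phi m f i j = (0 : Matrix (Fin (2*(m+2))) (Fin (2*(m+2))) ℂ) i j at this
  simpa [Phi, phi, dif_pos hp] using this

lemma Phi_apply (f : Sf m → ℂ) : Phi m f = phi m f := rfl

lemma mem_commTriang {n : ℕ} {M x : Matrix (Fin n) (Fin n) ℂ} :
    x ∈ commTriang n M ↔ x.BlockTriangular id ∧ x * M = M * x := Iff.rfl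

set_option maxHeartbeats 1000000 in
lemma Phi_range : LinearMap.range (Phi m) = commTriang (2*(m+2)) (Nmat m) := by
  ext x
  rw [LinearMap.mem_range, mem_commTriang]
  constructor
  · rintro ⟨f, rfl⟩
    rw [Phi_apply]
    exact ⟨phi_tri f, phi_comm f⟩
  · intro hx
    exact ⟨fun p => x p.1.1 p.1.2, by rw [Phi_apply]; exact (eq_phi hx.1 hx.2).symm⟩

lemma finrank_eq_card :
    Module.finrank ℂ (commTriang (2*(m+2)) (Nmat m)) = (Sf m).card := by
  rw [← Phi_range, LinearMap.finrank_range_of_inj Phi_inj, Module.finrank_pi,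
    Fintype.card_coe]

def Tf (m : ℕ) : Finset (Fin (2*(m+2)) × Fin (2*(m+2))) :=
  univ.filter fun p => p.1.1 ≤ p.2.1

def B1 (m : ℕ) : Finset (Fin (2*(m+2)) × Fin (2*(m+2))) :=
  {ia m} ×ˢ (univ \ {ia m, ic m})
def B2 (m : ℕ) : Finset (Fin (2*(m+2)) × Fin (2*(m+2))) :=
  {ic m} ×ˢ (Ioi (ic m))
def B3 (m : ℕ) : Finset (Fin (2*(m+2)) × Fin (2*(m+2))) :=
  (Ioc (ia m) (ib m)) ×ˢ {ib m}
def B4 (m : ℕ) : Finset (Fin (2*(m+2)) × Fin (2*(m+2))) :=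
  (univ \ {ia m, ic m}) ×ˢ {idd m}

def Bad (m : ℕ) : Finset (Fin (2*(m+2)) × Fin (2*(m+2))) :=
  B1 m ∪ B2 m ∪ B3 m ∪ B4 m

lemma Sf_eq : Sf m = Tf m \ Bad m := by
  ext ⟨i, j⟩
  simp only [Sf, Tf, Bad, B1, B2, B3, B4, mem_filter, mem_univ, true_and, mem_sdiff,
    mem_union, mem_product, mem_singleton, mem_insert, mem_Ioi, mem_Ioc, Fin.ext_iff,
    Fin.lt_def, Fin.le_def, ia_val, ib_val, ic_val, idd_val]
  omega

lemma Bad_subset : Bad m ⊆ Tf m := by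
  intro ⟨i, j⟩ hp
  simp only [Tf, Bad, B1, B2, B3, B4, mem_filter, mem_univ, true_and, mem_sdiff,
    mem_union, mem_product, mem_singleton, mem_insert, mem_Ioi, mem_Ioc, Fin.ext_iff,
    Fin.lt_def, Fin.le_def, ia_val, ib_val, ic_val, idd_val] at hp ⊢
  omega

lemma card_univ_sdiff : ((univ : Finset (Fin (2*(m+2)))) \ {ia m, ic m}).card = 2*m+2 := by
  rw [card_sdiff_of_subset (subset_univ _), card_univ, Fintype.card_fin]
  rw [card_insert_of_notMem (by simp), card_singleton]
  omega

lemma card_Bad : (Bad m).card = 6*m+6 := by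
  have d12 : Disjoint (B1 m) (B2 m) := by
    rw [Finset.disjoint_left]
    rintro ⟨i, j⟩ h1 h2
    simp only [B1, B2, mem_product, mem_singleton, Fin.ext_iff, ia_val, ic_val] at h1 h2
    omega
  have d13 : Disjoint (B1 m ∪ B2 m) (B3 m) := by
    rw [Finset.disjoint_left]
    rintro ⟨i, j⟩ h1 h2
    simp only [B1, B2, B3, mem_union, mem_product, mem_singleton, mem_Ioi, mem_Ioc,
      Fin.ext_iff, Fin.lt_def, Fin.le_def, ia_val, ib_val, ic_val] at h1 h2
    omega
  have d14 : Disjoint (B1 m ∪ B2 m ∪ B3 m) (B4 m) := by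
    rw [Finset.disjoint_left]
    rintro ⟨i, j⟩ h1 h2
    simp only [B1, B2, B3, B4, mem_union, mem_product, mem_singleton, mem_Ioi, mem_Ioc,
      mem_sdiff, mem_univ, true_and, mem_insert,
      Fin.ext_iff, Fin.lt_def, Fin.le_def, ia_val, ib_val, ic_val, idd_val] at h1 h2
    omega
  rw [Bad, card_union_of_disjoint d14, card_union_of_disjoint d13, card_union_of_disjoint d12]
  rw [B1, B2, B3, B4, card_product, card_product, card_product, card_product,
    card_univ_sdiff, Fin.card_Ioi, Fin.card_Ioc]
  simp only [card_singleton, ia_val, ib_val, ic_val, idd_val, one_mul, mul_one]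
  omega

lemma card_Tf : (Tf m).card * 2 = 4*(m*m) + 18*m + 20 := by
  have h1 : (Tf m).card = ∑ i : Fin (2*(m+2)), (2*(m+2) - i.1) := by
    rw [Tf, card_filter]
    rw [Fintype.sum_prod_type]
    apply Finset.sum_congr rfl
    intro i _
    have : (univ.filter fun j : Fin (2*(m+2)) => i.1 ≤ j.1) = Ici i := by
      ext j
      simp only [mem_filter, mem_univ, true_and, mem_Ici, Fin.le_def]
    calc (∑ j : Fin (2*(m+2)), if i.1 ≤ j.1 then 1 else 0)
        = (univ.filter fun j : Fin (2*(m+2)) => i.1 ≤ j.1).card := (card_filter _ _).symm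
      _ = (Ici i).card := by rw [this]
      _ = 2*(m+2) - i.1 := by rw [Fin.card_Ici]
  rw [h1, Fin.sum_univ_eq_sum_range]
  have h2 : ∑ k ∈ range (2*(m+2)), (2*(m+2) - k) = ∑ k ∈ range (2*(m+2)), (k+1) := by
    rw [← Finset.sum_range_reflect]
    apply Finset.sum_congr rfl
    intro k hk
    rw [Finset.mem_range] at hk
    omega
  rw [h2, Finset.sum_add_distrib, Finset.sum_const, card_range, smul_eq_mul, mul_one,
    add_mul, Finset.sum_range_id_mul_two]
  have : 2*(m+2) - 1 = 2*m+3 := by omega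
  rw [this]
  ring

lemma card_Sf : (Sf m).card = 2*(m*m) + 3*m + 4 := by
  have h := Finset.card_sdiff_add_card_eq_card (Bad_subset (m := m))
  rw [← Sf_eq, card_Bad] at h
  have h2 := card_Tf (m := m)
  generalize m*m = q at h2 ⊢
  omega

lemma key (m : ℕ) :
    Module.finrank ℂ (commTriang (2*(m+2)) (Nmat m)) = (2*(m+2)-1)*((m+2)-2)+4 := by
  rw [finrank_eq_card, card_Sf]
  have h1 : 2*(m+2)-1 = 2*m+3 := by omega
  have h2 : (m+2)-2 = m := by omega
  rw [h1, h2]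
  ring

end DimComm

/-- The set of upper-triangular matrices in `gl_{2l}` commuting with
`N_γ = E_{l,1} − E_{2l,l+1}` is a linear subspace of dimension `(2l−1)(l−2)+4`. -/
theorem dim_commTriang_Ngamma (l : ℕ) (hl : 2 ≤ l) :
    let N : Matrix (Fin (2 * l)) (Fin (2 * l)) ℂ :=
      single ⟨l - 1, by omega⟩ ⟨0, by omega⟩ 1 -
        single ⟨2 * l - 1, by omega⟩ ⟨l, by omega⟩ 1
    Module.finrank ℂ (commTriang (2 * l) N) = (2 * l - 1) * (l - 2) + 4 := by
  obtain ⟨m, rfl⟩ : ∃ m, l = m + 2 := ⟨l - 2, by omega⟩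
  intro N
  have h2 : (⟨2*(m+2)-1, by omega⟩ : Fin (2*(m+2))) = DimComm.idd m := by
    rw [Fin.ext_iff]
    show 2*(m+2)-1 = 2*m+3
    omega
  have hN : N = DimComm.Nmat m := by
    unfold N
    rw [DimComm.Nmat, h2]
    rfl
  rw [hN]
  exact DimComm.key m
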